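/- Let Q be a p-subgroup of a finite group G such that C_G(Q) has characteristic p, and let P be a p-subgroup of G containing Q. Then C_G(P) has characteristic p. -/

import Mathlib

/-- The largest normal `p`-subgroup `O_p(G)`: the join of all normal `p`-subgroups. -/
def pCore (p : ℕ) (G : Type*) [Group G] : Subgroup G :=
  ⨆ (N : Subgroup G) (_ : N.Normal) (_ : IsPGroup p N), N

/-- A group `G` has characteristic `p` if `C_G(O_p(G)) ≤ O_p(G)`. -/
def HasCharP (p : ℕ) (G : Type*) [Group G] : Prop :=
  Subgroup.centralizer (pCore p G : Set G) ≤ pCore p G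

/-- An element is `p`-central if it has order `p` and lies in the center of some
Sylow `p`-subgroup of `G`. -/
def IsPCentral (p : ℕ) {G : Type*} [Group G] (x : G) : Prop :=
  orderOf x = p ∧ ∃ S : Sylow p G,
    x ∈ (S : Subgroup G) ⊓ Subgroup.centralizer ((S : Subgroup G) : Set G)

/-- A `p`-subgroup `P` is `p`-centric if `Z(P) = P ⊓ C_G(P)` is a Sylow `p`-subgroup of
`C_G(P)`, expressed via maximality among `p`-subgroups of `C_G(P)`. -/
def IsPCentric (p : ℕ) {G : Type*} [Group G] (P : Subgroup G) : Prop :=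
  ∀ Q : Subgroup G, Q ≤ Subgroup.centralizer (P : Set G) → IsPGroup p Q →
    P ⊓ Subgroup.centralizer (P : Set G) ≤ Q →
    Q = P ⊓ Subgroup.centralizer (P : Set G)

/-- The step `P ↦ O_p(N_G(P))`, viewed as a subgroup of `G`. -/
def pRadicalStep (p : ℕ) {G : Type*} [Group G] (P : Subgroup G) : Subgroup G :=
  (pCore p ↥(Subgroup.normalizer (P : Set G))).map (Subgroup.normalizer (P : Set G)).subtype

/-- The chain `P₀ = Q`, `P_{i+1} = O_p(N_G(P_i))`. -/
def radChain (p : ℕ) {G : Type*} [Group G] (Q : Subgroup G) : ℕ → Subgroup G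
  | 0 => Q
  | n + 1 => pRadicalStep p (radChain p Q n)

/-- `G` has local characteristic `p`: every `p`-local subgroup has characteristic `p`. -/
def LocalCharP (p : ℕ) (G : Type*) [Group G] : Prop :=
  ∀ P : Subgroup G, P ≠ ⊥ → IsPGroup p P → HasCharP p ↥(Subgroup.normalizer (P : Set G))

/-- `G` has parabolic characteristic `p`: every `p`-local subgroup containing a Sylow
`p`-subgroup of `G` has characteristic `p`. -/
def ParabolicCharP (p : ℕ) (G : Type*) [Group G] : Prop :=
  ∀ P : Subgroup G, P ≠ ⊥ → IsPGroup p P →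
    (∃ S : Sylow p G, (S : Subgroup G) ≤ (Subgroup.normalizer (P : Set G))) → HasCharP p ↥(Subgroup.normalizer (P : Set G))

/-!
Growing `Q` inside `P` through normalizers (`Q < P ⊓ N_G(Q)` while `Q < P`, since `P` is
nilpotent), it suffices to treat the case where `P` normalizes `Q`. Then `P` acts on
`H = C_G(Q)` and `C_G(P) = C_H(P)`, so the theorem follows from: if `H` has characteristic `p`
and a `p`-group `B` normalizes `H`, then `C_H(B)` has characteristic `p`.

For this, `O_p(H) ∩ C_H(B)` is a normal `p`-subgroup of `C = C_H(B)`, so a `p'`-element of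
`C_C(O_p(C))` centralizes `C_{O_p(H)}(B)`, hence all of `O_p(H)` by Thompson's `A × B` lemma;
as `H` has characteristic `p` it then lies in `O_p(H)`, so it is trivial.

The `A × B` lemma is proved by induction on the `p`-group `W`, with `M = C_{WB}(x)`. If `W`
normalizes `M`, then `[x, w] ∈ C_W(B)` commutes with `x`, which forces `[x, w] = 1` because `x`
is a `p'`-element. Otherwise, by induction, `x` centralizes `N_W(M)`; then `M` is
self-normalizing in the `p`-group `WB`, so `M = WB`.
-/

open Subgroup
open scoped commutatorElement

section

variable {p : ℕ} {G : Type*} [Group G]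

theorem le_pCore {N : Subgroup G} [hN : N.Normal] (hNp : IsPGroup p N) : N ≤ pCore p G :=
  le_iSup₂_of_le N hN (le_iSup_of_le hNp le_rfl)

theorem exists_mem_of_mem_pCore {x : G} (hx : x ∈ pCore p G) :
    ∃ N : Subgroup G, N.Normal ∧ IsPGroup p N ∧ x ∈ N := by
  have hcore : pCore p G = ⨆ N : {N : Subgroup G // N.Normal ∧ IsPGroup p N}, N.1 := by
    simp only [pCore, iSup_subtype, iSup_and]
  rw [hcore] at hx
  refine iSup_induction _ (C := fun y ↦ ∃ N : Subgroup G, N.Normal ∧ IsPGroup p N ∧ y ∈ N) hx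
    (fun N x hx ↦ ⟨N.1, N.2.1, N.2.2, hx⟩) ⟨⊥, inferInstance, IsPGroup.of_bot, one_mem _⟩ ?_
  rintro x y ⟨N₁, hN₁, hN₁p, hx⟩ ⟨N₂, hN₂, hN₂p, hy⟩
  exact ⟨N₁ ⊔ N₂, inferInstance, hN₁p.to_sup_of_normal_right hN₂p,
    mul_mem (mem_sup_left hx) (mem_sup_right hy)⟩

theorem isPGroup_pCore : IsPGroup p (pCore p G) := fun ⟨x, hx⟩ ↦ by
  obtain ⟨N, -, hNp, hxN⟩ := exists_mem_of_mem_pCore hx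
  obtain ⟨k, hk⟩ := hNp ⟨x, hxN⟩
  exact ⟨k, Subtype.ext (by simpa using congrArg Subtype.val hk)⟩

instance pCore_characteristic : (pCore p G).Characteristic := by
  refine characteristic_iff_map_le.mpr fun ϕ ↦ map_le_iff_le_comap.mpr fun x hx ↦ ?_
  obtain ⟨N, hN, hNp, hxN⟩ := exists_mem_of_mem_pCore hx
  have : (N.map ϕ.toMonoidHom).Normal := hN.map _ ϕ.surjective
  exact le_pCore (hNp.map _) (mem_map_of_mem _ hxN)

theorem hasCharP_of_isPGroup_centralizer
    (h : IsPGroup p (centralizer (pCore p G : Set G))) : HasCharP p G :=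
  le_pCore h

def pCoreOf (p : ℕ) (H : Subgroup G) : Subgroup G :=
  (pCore p H).map H.subtype

theorem pCoreOf_le (H : Subgroup G) : pCoreOf p H ≤ H :=
  map_subtype_le _

theorem isPGroup_pCoreOf (H : Subgroup G) : IsPGroup p (pCoreOf p H) :=
  isPGroup_pCore.map _

theorem normalizer_le_normalizer_pCoreOf (H : Subgroup G) :
    normalizer H ≤ normalizer (pCoreOf p H : Set G) := by
  refine le_normalizer_iff.mpr ?_
  rintro g hg - ⟨w, hw, rfl⟩
  exact ⟨H.normalizerMonoidHom ⟨g, hg⟩ w,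
    characteristic_iff_le_comap.mp inferInstance (H.normalizerMonoidHom ⟨g, hg⟩) hw, rfl⟩

theorem HasCharP.mem_pCoreOf {H : Subgroup G} (hH : HasCharP p H) {g : G} (hgH : g ∈ H)
    (hg : g ∈ centralizer (pCoreOf p H)) : g ∈ pCoreOf p H := by
  refine ⟨⟨g, hgH⟩, hH fun w hw ↦ Subtype.ext ?_, rfl⟩
  exact hg w ⟨w, hw, rfl⟩

theorem IsPGroup.eq_one_of_pow_eq_one {n : ℕ} {W : Subgroup G} (hW : IsPGroup p W)
    (hn : p.Coprime n) {g : G} (hgW : g ∈ W) (hg : g ^ n = 1) : g = 1 := by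
  have := (hW.powEquiv hn).injective (a₁ := ⟨g, hgW⟩) (a₂ := 1) (Subtype.ext (by simpa using hg))
  simpa using congrArg Subtype.val this

theorem isPGroup_of_forall_coprime_eq_one [Fact p.Prime] [Finite G]
    (h : ∀ g : G, (orderOf g).Coprime p → g = 1) : IsPGroup p G := by
  intro g
  have hp : p.Prime := Fact.out
  refine ⟨(orderOf g).factorization p, h _ ?_⟩
  rw [orderOf_pow_of_dvd (pow_ne_zero _ hp.ne_zero) (Nat.ordProj_dvd _ _)]
  exact (Nat.coprime_ordCompl hp (orderOf_pos g).ne').symm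

theorem IsPGroup.lt_inf_normalizer [Fact p.Prime] [Finite G] {P Q : Subgroup G}
    (hP : IsPGroup p P) (hQP : Q < P) : Q < P ⊓ normalizer Q := by
  have : Group.IsNilpotent P := hP.isNilpotent
  have hlt : Q.subgroupOf P < ⊤ := by
    rw [lt_top_iff_ne_top, Ne, subgroupOf_eq_top]
    exact hQP.not_ge
  have := Group.normalizerCondition_of_isNilpotent _ hlt
  rwa [← subgroupOf_normalizer_eq hQP.le, ← map_subtype_lt_map_subtype, subgroupOf_map_subtype,
    subgroupOf_map_subtype, inf_of_le_left hQP.le, inf_comm] at this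

theorem commutatorElement_pow_orderOf_eq_one {x w : G} (h : Commute x ⁅x, w⁆) :
    ⁅x, w⁆ ^ orderOf x = 1 := by
  have hconj : x⁻¹ * ⁅x, w⁆ = w * x⁻¹ * w⁻¹ := by
    rw [commutatorElement_def]; group
  have := congrArg (· ^ orderOf x) hconj
  simpa only [conj_pow, inv_pow, pow_orderOf_eq_one, inv_one, mul_one, mul_inv_cancel,
    (h.inv_left).mul_pow, one_mul] using this

theorem commute_commutatorElement_of_mem_normalizer {M : Subgroup G} {x w b : G}
    (hxM : x ∈ centralizer M) (hbM : b ∈ M) (hwM : w ∈ normalizer M) :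
    Commute b ⁅x, w⁆ := by
  set m := w⁻¹ * b * w * b⁻¹ with hm_def
  have hm : m ∈ M :=
    mul_mem ((mem_normalizer_iff''.mp hwM b).mp hbM) (inv_mem hbM)
  have hxb : b * x * b⁻¹ = x := by rw [hxM b hbM, mul_inv_cancel_right]
  have hxm : m * x⁻¹ = x⁻¹ * m := by
    rw [mul_inv_eq_iff_eq_mul, mul_assoc, hxM m hm, inv_mul_cancel_left]
  have hbw : b * w * b⁻¹ = w * m := by rw [hm_def]; group
  rw [commute_iff_eq, ← mul_inv_eq_iff_eq_mul, conjugate_commutatorElement, hxb, hbw,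
    commutatorElement_def, commutatorElement_def]
  calc x * (w * m) * x⁻¹ * (w * m)⁻¹ = x * w * (m * x⁻¹) * m⁻¹ * w⁻¹ := by group
    _ = x * w * x⁻¹ * w⁻¹ := by rw [hxm]; group

/-- Thompson's `A × B` lemma, for `A = ⟨x⟩`. -/
theorem IsPGroup.mem_centralizer_of_mem_centralizer_inf_centralizer [Fact p.Prime] [Finite G]
    {W B : Subgroup G} {x : G} (hW : IsPGroup p W) (hB : IsPGroup p B) (hx : (orderOf x).Coprime p)
    (hxW : x ∈ normalizer W) (hBW : B ≤ normalizer W) (hxB : x ∈ centralizer B)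
    (hxWB : x ∈ centralizer (W ⊓ centralizer B : Subgroup G)) : x ∈ centralizer W := by
  induction W using WellFoundedLT.induction with
  | _ W ih =>
  set M := (W ⊔ B) ⊓ centralizer {x}
  have hxM : x ∈ centralizer M := fun m hm ↦ mem_centralizer_singleton_iff.mp hm.2
  have hBM : B ≤ M := le_inf le_sup_right fun b hb ↦ mem_centralizer_singleton_iff.mpr (hxB b hb)
  rcases (inf_le_left : W ⊓ normalizer M ≤ W).lt_or_eq with hlt | heq
  · have hE := ih _ hlt (hW.to_le inf_le_left)
      (inf_normalizer_le_normalizer_inf ⟨hxW, le_normalizer (centralizer_le_normalizer _ hxM)⟩)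
      ((le_inf hBW (hBM.trans (le_normalizer.trans le_normalizer))).trans
        inf_normalizer_le_normalizer_inf)
      (centralizer_le (inf_le_inf_right _ inf_le_left) hxWB)
    have hself : (W ⊔ B) ⊓ normalizer M ≤ M := by
      intro k hk
      obtain ⟨hkK, hkM⟩ := mem_inf.mp hk
      rw [← SetLike.mem_coe, coe_mul_of_right_le_normalizer_left W B hBW] at hkK
      obtain ⟨w, hw, b, hb, rfl⟩ := hkK
      have hwN : w ∈ normalizer M := by
        simpa using mul_mem hkM (inv_mem (le_normalizer (hBM hb)))
      exact mul_mem ⟨mem_sup_left hw, mem_centralizer_singleton_iff.mpr (hE w ⟨hw, hwN⟩)⟩ (hBM hb)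
    have hMK : M = W ⊔ B := by
      by_contra hne
      exact ((hW.to_sup_of_normal_left' hB hBW).lt_inf_normalizer
        (lt_of_le_of_ne inf_le_left hne)).not_ge hself
    intro w hw
    exact mem_centralizer_singleton_iff.mp (mem_inf.mp (hMK.symm ▸ mem_sup_left hw : w ∈ M)).2
  · intro w hw
    have hwN : w ∈ normalizer M := (heq.symm ▸ hw : w ∈ W ⊓ normalizer M).2
    have hcW : ⁅x, w⁆ ∈ W := by
      rw [commutatorElement_def]
      exact mul_mem ((mem_normalizer_iff.mp hxW w).mp hw) (inv_mem hw)
    have hcB : ⁅x, w⁆ ∈ centralizer B := fun b hb ↦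
      (commute_commutatorElement_of_mem_normalizer hxM (hBM hb) hwN).eq
    have hxc : Commute x ⁅x, w⁆ := (hxWB _ ⟨hcW, hcB⟩).symm
    have hc := hW.eq_one_of_pow_eq_one hx.symm hcW (commutatorElement_pow_orderOf_eq_one hxc)
    exact (commutatorElement_eq_one_iff_commute.mp hc).eq.symm

theorem HasCharP.inf_centralizer [Fact p.Prime] [Finite G] {H B : Subgroup G}
    (hH : HasCharP p H) (hB : IsPGroup p B) (hBH : B ≤ normalizer H) :
    HasCharP p ↥(H ⊓ centralizer B) := by
  set C := H ⊓ centralizer B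
  set W := pCoreOf p H
  have hCW : C ≤ normalizer (W : Set G) :=
    inf_le_left.trans (le_normalizer.trans (normalizer_le_normalizer_pCoreOf H))
  have hBW : B ≤ normalizer (W : Set G) := hBH.trans (normalizer_le_normalizer_pCoreOf H)
  have hWC : (W ⊓ centralizer B).subgroupOf C ≤ pCore p C := by
    have : ((W ⊓ centralizer B).subgroupOf C).Normal :=
      (normal_subgroupOf_iff_le_normalizer (inf_le_inf_right _ (pCoreOf_le H))).mpr
        ((le_inf hCW (inf_le_right.trans le_normalizer)).trans inf_normalizer_le_normalizer_inf)
    exact le_pCore (isPGroup_pCoreOf H).to_inf_left.comap_subtype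
  refine hasCharP_of_isPGroup_centralizer (isPGroup_of_forall_coprime_eq_one fun y hy ↦ ?_)
  set g : G := ((y : C) : G)
  have hgc : (orderOf g).Coprime p := by rwa [orderOf_coe, orderOf_coe]
  have hg : g ∈ centralizer (W ⊓ centralizer B : Subgroup G) := fun w hw ↦
    congrArg Subtype.val (y.2 ⟨w, pCoreOf_le H hw.1, hw.2⟩ (hWC hw))
  have hgW := (isPGroup_pCoreOf H).mem_centralizer_of_mem_centralizer_inf_centralizer hB hgc
    (hCW (y : C).2) hBW (y : C).2.2 hg
  have hg1 := (isPGroup_pCoreOf H).eq_one_of_pow_eq_one hgc.symm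
    (hH.mem_pCoreOf (y : C).2.1 hgW) (pow_orderOf_eq_one g)
  exact Subtype.ext (Subtype.ext hg1)

end

theorem stmt5_general (p : ℕ) [Fact p.Prime] (G : Type*) [Group G] [Finite G]
    (Q P : Subgroup G) (hP : IsPGroup p P) (hQP : Q ≤ P)
    (hC : HasCharP p ↥(Subgroup.centralizer (Q : Set G))) :
    HasCharP p ↥(Subgroup.centralizer (P : Set G)) := by
  induction Q using WellFoundedGT.induction with
  | _ Q ih =>
  rcases hQP.lt_or_eq with hQP | rfl
  · set R := P ⊓ normalizer Q
    have hQR : Q < R := hP.lt_inf_normalizer hQP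
    have hR := hC.inf_centralizer (hP.to_le inf_le_left)
      (inf_le_right.trans (le_normalizer_of_normal_subgroupOf (centralizer_le_normalizer _)))
    rw [inf_eq_right.mpr (centralizer_le hQR.le)] at hR
    exact ih R hQR inf_le_left hR
  · exact hC

/-- If `C_G(Q)` has characteristic `p` and `Q ≤ P` with `P` a `p`-subgroup, then
`C_G(P)` has characteristic `p`. -/
theorem stmt5 (p : ℕ) [Fact p.Prime] (G : Type*) [Group G] [Finite G]
    (Q P : Subgroup G) (hQ : IsPGroup p Q) (hP : IsPGroup p P) (hQP : Q ≤ P)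
    (hC : HasCharP p ↥(Subgroup.centralizer (Q : Set G))) :
    HasCharP p ↥(Subgroup.centralizer (P : Set G)) :=
  stmt5_general p G Q P hP hQP hC
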